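/- arXiv:1706.05579 — 8 statements merged into one kernel-verified Lean document; each statement's English description precedes it below -/
import Mathlib

section
/- (Naimark's theorem.) A countable family X = {x_j}_{j ∈ J} in a separable Hilbert space H is a Parseval frame for H if and only if there exist a Hilbert space K containing H (i.e., H embeds isometrically into K) and an orthonormal basis {e_j}_{j ∈ J} of K such that the orthogonal projection P of K onto (the image of) H satisfies P e_j = x_j for every j ∈ J. -/
/-!
A family `x` is a Parseval frame exactly when its analysis operator `T v = (⟪x j, v⟫)_j` is an
isometry `H → ℓ²(J)`. Take `K = ℓ²(J)` with its standard basis `e`, and identify `H` with the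
range of `T`: since `⟪e j, T v⟫ = ⟪x j, v⟫ = ⟪T (x j), T v⟫` for all `v`, the orthogonal
projection of `e j` onto that range is `T (x j)`. Conversely, if `P (e j) = ι (x j)` then
`⟪e j, ι v⟫ = ⟪x j, v⟫`, and Parseval's identity for the basis `e` at `ι v` is the frame identity.
-/

open scoped ComplexInnerProductSpace lp

section

open scoped InnerProductSpace

variable {𝕜 E F J : Type*} [RCLike 𝕜]
  [NormedAddCommGroup E] [InnerProductSpace 𝕜 E] [NormedAddCommGroup F] [InnerProductSpace 𝕜 F]

variable (𝕜) in
def IsParsevalFrame (x : J → E) : Prop :=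
  ∀ v : E, HasSum (fun j => ‖⟪x j, v⟫_𝕜‖ ^ 2) (‖v‖ ^ 2)

theorem HilbertBasis.isParsevalFrame (b : HilbertBasis J 𝕜 E) : IsParsevalFrame 𝕜 b := by
  intro v
  simpa [b.repr_apply_apply, Real.rpow_two] using lp.hasSum_norm (p := 2) (by norm_num) (b.repr v)

theorem HilbertBasis.inner_default_apply (f : ℓ²(J, 𝕜)) (j : J) :
    ⟪(default : HilbertBasis J 𝕜 ℓ²(J, 𝕜)) j, f⟫_𝕜 = f j :=
  ((default : HilbertBasis J 𝕜 ℓ²(J, 𝕜)).repr_apply_apply f j).symm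

namespace IsParsevalFrame

theorem of_inner_eq {x : J → E} {e : J → F} (he : IsParsevalFrame 𝕜 e) (ι : E →ₗᵢ[𝕜] F)
    (h : ∀ j v, ⟪e j, ι v⟫_𝕜 = ⟪x j, v⟫_𝕜) : IsParsevalFrame 𝕜 x := by
  intro v
  simpa [h, ι.norm_map] using he (ι v)

theorem memℓp {x : J → E} (hx : IsParsevalFrame 𝕜 x) (v : E) :
    Memℓp (fun j => ⟪x j, v⟫_𝕜) 2 :=
  memℓp_gen <| by simpa [Real.rpow_two] using (hx v).summable

noncomputable def analysis {x : J → E} (hx : IsParsevalFrame 𝕜 x) : E →ₗᵢ[𝕜] ℓ²(J, 𝕜) where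
  toFun v := ⟨_, hx.memℓp v⟩
  map_add' u v := by ext j; exact inner_add_right _ _ _
  map_smul' c v := by ext j; exact inner_smul_right _ _ _
  norm_map' v := by
    have h := lp.hasSum_norm (p := 2) (by norm_num) (⟨_, hx.memℓp v⟩ : ℓ²(J, 𝕜))
    simp only [ENNReal.toReal_ofNat, Real.rpow_two] at h
    exact (pow_left_inj₀ (norm_nonneg _) (norm_nonneg _) two_ne_zero).1 (h.unique (hx v))

@[simp]
theorem analysis_apply {x : J → E} (hx : IsParsevalFrame 𝕜 x) (v : E) (j : J) :
    hx.analysis v j = ⟪x j, v⟫_𝕜 :=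
  rfl

end IsParsevalFrame

instance LinearIsometry.completeSpace_range [CompleteSpace E] (T : E →ₗᵢ[𝕜] F) :
    CompleteSpace (LinearMap.range T.toLinearMap) :=
  completeSpace_coe_iff_isComplete.2 T.isometry.isUniformInducing.isComplete_range

theorem LinearIsometry.starProjection_range_apply_eq [CompleteSpace E] (T : E →ₗᵢ[𝕜] F)
    {y : F} {x : E} (h : ∀ v, ⟪y, T v⟫_𝕜 = ⟪x, v⟫_𝕜) :
    (LinearMap.range T.toLinearMap).starProjection y = T x := by
  refine Submodule.eq_starProjection_of_mem_of_inner_eq_zero (LinearMap.mem_range_self _ x) ?_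
  rintro _ ⟨v, rfl⟩
  simp [inner_sub_left, h]

end

theorem stmt_2_general {H : Type} [NormedAddCommGroup H] [InnerProductSpace ℂ H] [CompleteSpace H]
    {J : Type} (x : J → H) :
    (∀ v : H, HasSum (fun j : J => ‖⟪x j, v⟫‖ ^ 2) (‖v‖ ^ 2)) ↔
      ∃ (K : Type) (_ : NormedAddCommGroup K) (_ : InnerProductSpace ℂ K)
        (_ : CompleteSpace K) (ι : H →ₗᵢ[ℂ] K) (e : HilbertBasis J ℂ K)
        (P : K →L[ℂ] K),
        (∀ y : K, ∃ h : H, P y = ι h) ∧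
        (∀ (y : K) (h : H), ⟪y - P y, ι h⟫ = 0) ∧
        (∀ j : J, P (e j) = ι (x j)) := by
  change IsParsevalFrame ℂ x ↔ _
  constructor
  · intro hx
    let T := hx.analysis
    let U := LinearMap.range T.toLinearMap
    refine ⟨ℓ²(J, ℂ), inferInstance, inferInstance, inferInstance, T, default, U.starProjection,
      fun y => ?_, fun y h => ?_, fun j => ?_⟩
    · obtain ⟨h, hh⟩ := U.starProjection_apply_mem y
      exact ⟨h, hh.symm⟩
    · exact U.starProjection_inner_eq_zero y _ (LinearMap.mem_range_self _ h)
    · exact T.starProjection_range_apply_eq fun v =>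
        (HilbertBasis.inner_default_apply _ j).trans (hx.analysis_apply v j)
  · rintro ⟨K, _, _, _, ι, e, P, -, horth, hPe⟩
    refine e.isParsevalFrame.of_inner_eq ι fun j v => ?_
    rw [← sub_add_cancel (e j) (P (e j)), inner_add_left, horth, zero_add, hPe, ι.inner_map_map]

/-- Naimark's theorem: A countable family `X = {x_j}_{j ∈ J}` in a separable
complex Hilbert space `H` is a Parseval frame for `H` iff there exist a Hilbert space `K`
into which `H` embeds isometrically (via a linear isometry `ι`), an orthonormal basis
`{e_j}_{j ∈ J}` of `K` (a Hilbert basis), and the orthogonal projection `P` of `K` onto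
the image of `H` (characterized by: `P y` lies in `ι(H)` and `y - P y ⊥ ι(H)` for all
`y ∈ K`) satisfies `P e_j = ι x_j` for every `j ∈ J`. -/
theorem stmt_2 {H : Type} [NormedAddCommGroup H] [InnerProductSpace ℂ H] [CompleteSpace H]
    [TopologicalSpace.SeparableSpace H]
    {J : Type} [Countable J] (x : J → H) :
    (∀ v : H, HasSum (fun j : J => ‖⟪x j, v⟫‖ ^ 2) (‖v‖ ^ 2)) ↔
      ∃ (K : Type) (_ : NormedAddCommGroup K) (_ : InnerProductSpace ℂ K)
        (_ : CompleteSpace K) (ι : H →ₗᵢ[ℂ] K) (e : HilbertBasis J ℂ K)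
        (P : K →L[ℂ] K),
        (∀ y : K, ∃ h : H, P y = ι h) ∧
        (∀ (y : K) (h : H), ⟪y - P y, ι h⟫ = 0) ∧
        (∀ j : J, P (e j) = ι (x j)) :=
  stmt_2_general x
end

section
/- Let X = {x_j}_{j ∈ J} be a finite frame for a d-dimensional complex Hilbert space H, and let • : J × J → J be a binary operation. Then • is a frame multiplication for X if and only if for every family of scalars {a_i}_{i ∈ J} and every j ∈ J: ∑_{i ∈ J} a_i x_i = 0 implies both ∑_{i ∈ J} a_i x_{i•j} = 0 and ∑_{i ∈ J} a_i x_{j•i} = 0. -/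
open scoped ComplexInnerProductSpace

/-- A binary operation `op` on the index set `J` is a *frame multiplication* for the
family `x : J → H` if it extends to a bilinear product `∗` on all of `H`, i.e. there is
a bilinear map `m : H × H → H` with `m (x j) (x k) = x (op j k)` for all `j, k`. -/
def IsFrameMult {H : Type} [NormedAddCommGroup H] [InnerProductSpace ℂ H]
    {J : Type} (x : J → H) (op : J → J → J) : Prop :=
  ∃ m : H →ₗ[ℂ] H →ₗ[ℂ] H, ∀ j k : J, m (x j) (x k) = x (op j k)

/-- Let `X = {x_j}_{j ∈ J}` be a finite frame for a finite-dimensional complex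
Hilbert space `H` and `• : J × J → J` a binary operation.  Then `•` is a frame multiplication
for `X` iff for every family of scalars `{a_i}` and every `j ∈ J`:
`∑ a_i x_i = 0` implies `∑ a_i x_{i•j} = 0` and `∑ a_i x_{j•i} = 0`. -/
theorem stmt_8 {H : Type} [NormedAddCommGroup H] [InnerProductSpace ℂ H]
    [FiniteDimensional ℂ H] {J : Type} [Fintype J]
    (x : J → H) (hframe : Submodule.span ℂ (Set.range x) = ⊤)
    (op : J → J → J) :
    IsFrameMult x op ↔
      ∀ (a : J → ℂ) (j : J), (∑ i, a i • x i = 0) →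
        (∑ i, a i • x (op i j) = 0) ∧ (∑ i, a i • x (op j i) = 0) := by
  constructor
  · rintro ⟨m, hm⟩ a j ha
    constructor
    · have h1 : ∑ i, a i • x (op i j) = m (∑ i, a i • x i) (x j) := by
        simp [map_sum, LinearMap.sum_apply, map_smul, LinearMap.smul_apply, hm]
      rw [h1, ha]; simp
    · have h2 : ∑ i, a i • x (op j i) = m (x j) (∑ i, a i • x i) := by
        simp [map_sum, map_smul, hm]
      rw [h2, ha]; simp
  · intro hcond
    classical
    set S : (J → ℂ) →ₗ[ℂ] H :=
      { toFun := fun a => ∑ i, a i • x i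
        map_add' := by intro a b; simp [add_smul, Finset.sum_add_distrib]
        map_smul' := by intro c a; simp [smul_smul, Finset.smul_sum] } with hSdef
    have hSx : ∀ j, S (Pi.single j 1) = x j := by
      intro j
      simp [hSdef, Pi.single_apply, ite_smul]
    have hSrange : LinearMap.range S = ⊤ := by
      rw [← top_le_iff, ← hframe, Submodule.span_le]
      rintro _ ⟨i, rfl⟩
      exact ⟨Pi.single i 1, hSx i⟩
    obtain ⟨σ, hσ⟩ := S.exists_rightInverse_of_surjective hSrange
    have hσ' : ∀ v : H, S (σ v) = v := fun v => congrFun (congrArg DFunLike.coe hσ) v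
    set B : (J → ℂ) →ₗ[ℂ] (J → ℂ) →ₗ[ℂ] H :=
      LinearMap.mk₂ ℂ (fun a b => ∑ j, ∑ k, (a j * b k) • x (op j k))
        (by intro a a' b; simp [add_mul, add_smul, Finset.sum_add_distrib])
        (by intro c a b; simp [Finset.smul_sum, mul_assoc, smul_smul])
        (by intro a b b'; simp [mul_add, add_smul, Finset.sum_add_distrib])
        (by intro c a b; simp [Finset.smul_sum, smul_smul, mul_left_comm])
      with hBdef
    have key1 : ∀ a a' b : J → ℂ, S a = S a' → B a b = B a' b := by
      intro a a' b h
      have hz : ∑ i, (a - a') i • x i = 0 := by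
        have : S (a - a') = 0 := by rw [map_sub, h, sub_self]
        simpa [hSdef] using this
      have h0 : B (a - a') b = 0 := by
        have hc : ∀ k, ∑ i, (a i - a' i) • x (op i k) = 0 := fun k => by simpa using (hcond (a - a') k hz).1
        calc B (a - a') b = ∑ j, ∑ k, ((a - a') j * b k) • x (op j k) := rfl
          _ = ∑ k, ∑ j, b k • ((a - a') j • x (op j k)) := by
              rw [Finset.sum_comm]
              refine Finset.sum_congr rfl fun k _ => Finset.sum_congr rfl fun j _ => ?_
              rw [mul_comm, mul_smul]
          _ = ∑ k, b k • ∑ j, (a - a') j • x (op j k) := by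
              simp [Finset.smul_sum]
          _ = 0 := by simp [hc]
      have hsub : B a b - B a' b = 0 := by
        rw [← LinearMap.sub_apply, ← map_sub]; exact h0
      exact sub_eq_zero.mp hsub
    have key2 : ∀ a b b' : J → ℂ, S b = S b' → B a b = B a b' := by
      intro a b b' h
      have hz : ∑ i, (b - b') i • x i = 0 := by
        have : S (b - b') = 0 := by rw [map_sub, h, sub_self]
        simpa [hSdef] using this
      have h0 : B a (b - b') = 0 := by
        have hc : ∀ j, ∑ i, (b i - b' i) • x (op j i) = 0 := fun j => by simpa using (hcond (b - b') j hz).2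
        calc B a (b - b') = ∑ j, ∑ k, (a j * (b - b') k) • x (op j k) := rfl
          _ = ∑ j, a j • ∑ k, (b - b') k • x (op j k) := by
              refine Finset.sum_congr rfl fun j _ => ?_
              rw [Finset.smul_sum]
              exact Finset.sum_congr rfl fun k _ => (mul_smul _ _ _)
          _ = 0 := by simp [hc]
      have hsub : B a b - B a b' = 0 := by
        rw [← map_sub]; exact h0
      exact sub_eq_zero.mp hsub
    refine ⟨(B.comp σ).compl₂ σ, fun j k => ?_⟩
    have e1 : B (σ (x j)) (σ (x k)) = B (Pi.single j 1) (Pi.single k 1) := by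
      rw [key1 _ (Pi.single j 1) _ (by rw [hσ' (x j), hSx j]),
          key2 _ _ (Pi.single k 1) (by rw [hσ' (x k), hSx k])]
    have e2 : B (Pi.single j 1) (Pi.single k 1) = x (op j k) := by
      simp [hBdef, Pi.single_apply, ite_smul, mul_ite, ite_mul]
    simpa [LinearMap.compl₂_apply, LinearMap.comp_apply] using e1.trans e2
end

section
/- Let X = {x_j}_{j ∈ J} and Y = {y_j}_{j ∈ J} be finite tight frames for a d-dimensional complex Hilbert space H. If X is unitarily equivalent to Y, then mult(X) = mult(Y), i.e., a binary operation • : J × J → J is a frame multiplication for X if and only if it is a frame multiplication for Y. -/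
open scoped ComplexInnerProductSpace

lemma frameMult_transfer {H : Type} [NormedAddCommGroup H] [InnerProductSpace ℂ H]
    {J : Type} (x y : J → H) (e : H ≃ₗ[ℂ] H) (hj : ∀ j, x j = e (y j))
    (op : J → J → J) (h : IsFrameMult x op) : IsFrameMult y op := by
  obtain ⟨m, hm⟩ := h
  refine ⟨LinearMap.mk₂ ℂ (fun u v => e.symm (m (e u) (e v)))
    (by intro a b v; simp) (by intro c a v; simp)
    (by intro a b v; simp) (by intro c a v; simp), ?_⟩
  intro j k
  rw [LinearMap.mk₂_apply, ← hj j, ← hj k, hm, hj (op j k), LinearEquiv.symm_apply_apply]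

/-- If `X` and `Y` are finite tight frames for a finite-dimensional complex
Hilbert space `H` and `X` is unitarily equivalent to `Y` (i.e. `x_j = c U y_j` for a unitary
`U` and a constant `c > 0`), then `mult(X) = mult(Y)`: a binary operation on `J` is a frame
multiplication for `X` iff it is one for `Y`. -/
theorem stmt_10 {H : Type} [NormedAddCommGroup H] [InnerProductSpace ℂ H]
    [FiniteDimensional ℂ H] {J : Type} [Fintype J]
    (x y : J → H)
    (hx : ∃ A : ℝ, 0 < A ∧ ∀ v : H, ∑ j, ‖⟪x j, v⟫‖ ^ 2 = A * ‖v‖ ^ 2)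
    (hy : ∃ B : ℝ, 0 < B ∧ ∀ v : H, ∑ j, ‖⟪y j, v⟫‖ ^ 2 = B * ‖v‖ ^ 2)
    (hequiv : ∃ (U : H ≃ₗᵢ[ℂ] H) (c : ℝ), 0 < c ∧ ∀ j, x j = (c : ℂ) • U (y j))
    (op : J → J → J) :
    IsFrameMult x op ↔ IsFrameMult y op := by
  obtain ⟨U, c, hc, hxy⟩ := hequiv
  have hc' : (c : ℂ) ≠ 0 := by exact_mod_cast hc.ne'
  let e : H ≃ₗ[ℂ] H :=
    U.toLinearEquiv.trans (LinearEquiv.smulOfNeZero ℂ H (c : ℂ) hc')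
  have he : ∀ j, x j = e (y j) := fun j => by
    rw [hxy j]; rfl
  constructor
  · exact frameMult_transfer x y e he op
  · intro h
    exact frameMult_transfer y x e.symm
      (fun j => by rw [he j, LinearEquiv.symm_apply_apply]) op h
end

section
/- Let X = {x_j}_{j ∈ J} be a finite frame for a complex Hilbert space H with dim H > 1. If every binary operation • : J × J → J is a frame multiplication for X, then X is linearly independent, hence a basis for H. If, in addition, X is a tight frame (respectively a Parseval frame) for H, then X is an orthogonal (respectively orthonormal) basis for H. -/
/-!
If every operation is a frame multiplication, then so is `(j, k) ↦ f j` for every map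
`f : J → J`, and applying the bilinear map to a linear relation `∑ c j • x j = 0` shows that
`∑ c j • x (f j) = 0` as well. Taking for `f` the constant map `b` and the map that sends
`i` to `a` and everything else to `b`, the difference of the two relations is
`c i • (x a - x b) = 0`; so a nontrivial relation forces `x` to be constant, which is
impossible for a spanning family when `dim H > 1`.

A tight frame with bound `A` has frame operator `A • id`, because over `ℂ` an operator is
determined by its quadratic form. Applied to `x i`, this reads
`∑ j, ⟪x j, x i⟫ • x j = A • x i`, and comparing coefficients in the basis `x` gives
`⟪x j, x i⟫ = A δ_{ij}`.
-/

open scoped ComplexInnerProductSpace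

section LinearAlgebra

variable {K M J : Type*} [DivisionRing K] [AddCommGroup M] [Module K M]

theorem exists_ne_of_span_range_eq_top [Finite J] {x : J → M}
    (hspan : Submodule.span K (Set.range x) = ⊤) (hdim : 1 < Module.finrank K M) :
    ∃ a b, x a ≠ x b := by
  classical
  have := Fintype.ofFinite J
  by_contra! hconst
  have hcard : (Set.range x).toFinset.card ≤ 1 := by
    simp only [Finset.card_le_one, Set.mem_toFinset]
    rintro _ ⟨a, rfl⟩ _ ⟨b, rfl⟩
    exact hconst a b
  have := finrank_span_le_card (R := K) (Set.range x)
  rw [hspan, finrank_top] at this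
  omega

variable [Fintype J]

theorem linearIndependent_of_sum_smul_comp_eq_zero {x : J → M}
    (hcomp : ∀ c : J → K, ∑ j, c j • x j = 0 → ∀ f : J → J, ∑ j, c j • x (f j) = 0)
    {a b : J} (hab : x a ≠ x b) : LinearIndependent K x := by
  classical
  rw [Fintype.linearIndependent_iff]
  intro c hc i
  by_contra hci
  apply hab
  have hdiff : c i • (x a - x b) = 0 := by
    calc c i • (x a - x b)
        = ∑ j, c j • (x (Function.update (fun _ ↦ b) i a j) - x b) := by
          rw [Fintype.sum_eq_single i fun j hj ↦ by simp [hj]]; simp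
      _ = 0 := by simp only [smul_sub, Finset.sum_sub_distrib, hcomp c hc, sub_self]
  exact sub_eq_zero.mp ((smul_eq_zero.mp hdiff).resolve_left hci)

end LinearAlgebra

section InnerProduct

variable {H J : Type} [NormedAddCommGroup H] [InnerProductSpace ℂ H]

theorem IsFrameMult.sum_smul_eq_zero {x : J → H} {op : J → J → J} (hop : IsFrameMult x op)
    {s : Finset J} {c : J → ℂ} (hc : ∑ j ∈ s, c j • x j = 0) (k : J) :
    ∑ j ∈ s, c j • x (op j k) = 0 := by
  obtain ⟨m, hm⟩ := hop
  simpa [hm] using congrArg (fun v ↦ m v (x k)) hc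

variable [Fintype J]

theorem sum_inner_smul_eq_smul_of_sum_norm_inner_sq {x : J → H} {A : ℝ}
    (htight : ∀ v : H, ∑ j, ‖⟪x j, v⟫‖ ^ 2 = A * ‖v‖ ^ 2) (v : H) :
    ∑ j, ⟪x j, v⟫ • x j = (A : ℂ) • v := by
  let S : H →ₗ[ℂ] H := ∑ j, (innerSL ℂ (x j)).toLinearMap.smulRight (x j)
  have hS : ∀ v, S v = ∑ j, ⟪x j, v⟫ • x j := fun v ↦ by simp [S, LinearMap.sum_apply]
  have hzero : S - (A : ℂ) • LinearMap.id = 0 := by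
    rw [← inner_map_self_eq_zero]
    intro v
    have hSv : ⟪S v, v⟫ = ((A * ‖v‖ ^ 2 : ℝ) : ℂ) := by
      simp only [hS, sum_inner, inner_smul_left, RCLike.conj_mul, ← htight v]
      push_cast; rfl
    rw [LinearMap.sub_apply, inner_sub_left, hSv, LinearMap.smul_apply, LinearMap.id_apply,
      inner_smul_left, inner_self_eq_norm_sq_to_K]
    simp
  simpa [hS, sub_eq_zero] using LinearMap.congr_fun hzero v

theorem inner_eq_ite_of_sum_norm_inner_sq [DecidableEq J] {x : J → H}
    (hli : LinearIndependent ℂ x) {A : ℝ}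
    (htight : ∀ v : H, ∑ j, ‖⟪x j, v⟫‖ ^ 2 = A * ‖v‖ ^ 2) (i j : J) :
    ⟪x i, x j⟫ = if i = j then (A : ℂ) else 0 := by
  have hrel : ∑ k, (⟪x k, x j⟫ - if k = j then (A : ℂ) else 0) • x k = 0 := by
    simp [sub_smul, Finset.sum_sub_distrib, ite_smul,
      sum_inner_smul_eq_smul_of_sum_norm_inner_sq htight]
  exact sub_eq_zero.mp (Fintype.linearIndependent_iff.mp hli _ hrel i)

end InnerProduct

theorem stmt_12_general {H : Type} [NormedAddCommGroup H] [InnerProductSpace ℂ H]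
    {J : Type} [Fintype J]
    (x : J → H) (hframe : Submodule.span ℂ (Set.range x) = ⊤)
    (hdim : 1 < Module.finrank ℂ H)
    (hall : ∀ op : J → J → J, IsFrameMult x op) :
    LinearIndependent ℂ x ∧
    ((∃ A : ℝ, 0 < A ∧ ∀ v : H, ∑ j, ‖⟪x j, v⟫‖ ^ 2 = A * ‖v‖ ^ 2) →
      ∀ i j : J, i ≠ j → ⟪x i, x j⟫ = 0) ∧
    ((∀ v : H, ∑ j, ‖⟪x j, v⟫‖ ^ 2 = ‖v‖ ^ 2) → Orthonormal ℂ x) := by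
  classical
  obtain ⟨a, b, hab⟩ := exists_ne_of_span_range_eq_top hframe hdim
  have hli : LinearIndependent ℂ x := linearIndependent_of_sum_smul_comp_eq_zero
    (fun _ hc f ↦ (hall fun j _ ↦ f j).sum_smul_eq_zero hc a) hab
  refine ⟨hli, ?_, ?_⟩
  · rintro ⟨A, -, htight⟩ i j hij
    simpa [hij] using inner_eq_ite_of_sum_norm_inner_sq hli htight i j
  · intro hparseval
    rw [orthonormal_iff_ite]
    intro i j
    simpa using inner_eq_ite_of_sum_norm_inner_sq hli (A := 1) (by simpa using hparseval) i j

/-- Let `X = {x_j}` be a finite frame for a complex Hilbert space `H` with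
`dim H > 1`.  If every binary operation on `J` is a frame multiplication for `X`, then `X`
is linearly independent, hence a basis for `H`.  If in addition `X` is a tight frame
(resp. a Parseval frame), then `X` is an orthogonal (resp. orthonormal) basis for `H`. -/
theorem stmt_12 {H : Type} [NormedAddCommGroup H] [InnerProductSpace ℂ H]
    [FiniteDimensional ℂ H] {J : Type} [Fintype J]
    (x : J → H) (hframe : Submodule.span ℂ (Set.range x) = ⊤)
    (hdim : 1 < Module.finrank ℂ H)
    (hall : ∀ op : J → J → J, IsFrameMult x op) :
    LinearIndependent ℂ x ∧
    ((∃ A : ℝ, 0 < A ∧ ∀ v : H, ∑ j, ‖⟪x j, v⟫‖ ^ 2 = A * ‖v‖ ^ 2) →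
      ∀ i j : J, i ≠ j → ⟪x i, x j⟫ = 0) ∧
    ((∀ v : H, ∑ j, ‖⟪x j, v⟫‖ ^ 2 = ‖v‖ ^ 2) → Orthonormal ℂ x) :=
  stmt_12_general x hframe hdim hall
end

section
/- Let G be a finite group and let X = {x_g}_{g ∈ G} be a finite frame for a d-dimensional complex Hilbert space H. Then X is a group frame for G if and only if its Gramian is a G-matrix, i.e., if and only if there exists a function ν : G → ℂ such that ⟨x_h, x_g⟩ = ν(g⁻¹ • h) for all g, h ∈ G. -/
open scoped ComplexInnerProductSpace

/-!
Two spanning families with the same Gram matrix differ by a unitary: the synthesis map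
`c ↦ ∑ cᵢ xᵢ` of one family has the same kernel as that of the other, because the Gram matrix
determines `‖∑ cᵢ xᵢ‖`, so `xᵢ ↦ yᵢ` extends to a well-defined isometry. If the Gramian of
`{x_h}` is a `G`-matrix, it is invariant under left translation, so each `g` yields a unitary
`x_h ↦ x_{gh}`; these are multiplicative since unitaries are determined on a spanning set.
Conversely, `⟪x_g, x_h⟫ = ⟪π g⁻¹ x_g, π g⁻¹ x_h⟫ = ⟪x_1, x_{g⁻¹h}⟫`.
-/

section GramMatrix

variable {𝕜 ι H K : Type*} [RCLike 𝕜]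
  [NormedAddCommGroup H] [InnerProductSpace 𝕜 H] [NormedAddCommGroup K] [InnerProductSpace 𝕜 K]

local notation "⟪" a ", " b "⟫" => inner 𝕜 a b

theorem inner_linearCombination_eq_of_inner_eq {x : ι → H} {y : ι → K}
    (hxy : ∀ i j, ⟪x i, x j⟫ = ⟪y i, y j⟫) (a b : ι →₀ 𝕜) :
    ⟪Finsupp.linearCombination 𝕜 y a, Finsupp.linearCombination 𝕜 y b⟫ =
      ⟪Finsupp.linearCombination 𝕜 x a, Finsupp.linearCombination 𝕜 x b⟫ := by
  simp only [Finsupp.linearCombination_apply, Finsupp.sum, sum_inner, inner_sum, inner_smul_left,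
    inner_smul_right, hxy]

theorem exists_linearIsometry_of_inner_eq {x : ι → H} {y : ι → K}
    (hx : Submodule.span 𝕜 (Set.range x) = ⊤) (hxy : ∀ i j, ⟪x i, x j⟫ = ⟪y i, y j⟫) :
    ∃ T : H →ₗᵢ[𝕜] K, ∀ i, T (x i) = y i := by
  set Sx := Finsupp.linearCombination 𝕜 x
  set Sy := Finsupp.linearCombination 𝕜 y
  obtain ⟨R, hR⟩ := Sx.exists_rightInverse_of_surjective
    (by rw [Finsupp.range_linearCombination, hx])
  have hSxR (v : H) : Sx (R v) = v := LinearMap.congr_fun hR v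
  have ker_le (c : ι →₀ 𝕜) (hc : Sx c = 0) : Sy c = 0 := by
    rw [← inner_self_eq_zero (𝕜 := 𝕜), inner_linearCombination_eq_of_inner_eq hxy, hc,
      inner_zero_left]
  refine ⟨(Sy ∘ₗ R).isometryOfInner fun u v => ?_, fun i => ?_⟩
  · simp only [LinearMap.comp_apply, Sy, inner_linearCombination_eq_of_inner_eq hxy]
    rw [hSxR, hSxR]
  · have hdiff : Sx (R (x i) - Finsupp.single i 1) = 0 := by simp [Sx, hSxR]
    simpa [Sy, sub_eq_zero] using ker_le _ hdiff

theorem exists_linearIsometryEquiv_of_inner_eq {x : ι → H} {y : ι → K}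
    (hx : Submodule.span 𝕜 (Set.range x) = ⊤) (hy : Submodule.span 𝕜 (Set.range y) = ⊤)
    (hxy : ∀ i j, ⟪x i, x j⟫ = ⟪y i, y j⟫) :
    ∃ U : H ≃ₗᵢ[𝕜] K, ∀ i, U (x i) = y i := by
  obtain ⟨T, hT⟩ := exists_linearIsometry_of_inner_eq hx hxy
  have hsurj : Function.Surjective T := by
    rw [← LinearIsometry.coe_toLinearMap, ← LinearMap.range_eq_top, eq_top_iff, ← hy,
      Submodule.span_le]
    rintro _ ⟨i, rfl⟩
    exact ⟨x i, hT i⟩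
  exact ⟨LinearIsometryEquiv.ofSurjective T hsurj, hT⟩

theorem LinearIsometryEquiv.ext_on_range {U V : H ≃ₗᵢ[𝕜] K} {x : ι → H}
    (hx : Submodule.span 𝕜 (Set.range x) = ⊤) (h : ∀ i, U (x i) = V (x i)) : U = V :=
  LinearIsometryEquiv.toLinearEquiv_injective <| LinearEquiv.toLinearMap_injective <|
    LinearMap.ext_on_range hx h

theorem exists_unitaryRepresentation_of_inner_smul {G : Type*} [Group G] [MulAction G ι]
    {x : ι → H} (hx : Submodule.span 𝕜 (Set.range x) = ⊤)
    (hinv : ∀ (g : G) i j, ⟪x (g • i), x (g • j)⟫ = ⟪x i, x j⟫) :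
    ∃ π : G →* (H ≃ₗᵢ[𝕜] H), ∀ g i, π g (x i) = x (g • i) := by
  have hgx (g : G) : Submodule.span 𝕜 (Set.range fun i => x (g • i)) = ⊤ := by
    rw [← hx]
    exact congrArg _ ((MulAction.bijective g).surjective.range_comp x)
  choose U hU using fun g : G =>
    exists_linearIsometryEquiv_of_inner_eq hx (hgx g) fun i j => (hinv g i j).symm
  refine ⟨MonoidHom.mk' U fun a b => LinearIsometryEquiv.ext_on_range hx fun i => ?_, hU⟩
  rw [LinearIsometryEquiv.coe_mul, Function.comp_apply, hU, hU, hU, mul_smul]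

end GramMatrix

theorem stmt_13_general {G : Type} [Group G]
    {H : Type} [NormedAddCommGroup H] [InnerProductSpace ℂ H]
    (x : G → H) (hframe : Submodule.span ℂ (Set.range x) = ⊤) :
    (∃ π : G →* (H ≃ₗᵢ[ℂ] H), ∀ g h : G, π g (x h) = x (g * h)) ↔
      ∃ ν : G → ℂ, ∀ g h : G, ⟪x g, x h⟫ = ν (g⁻¹ * h) := by
  constructor
  · rintro ⟨π, hπ⟩
    refine ⟨fun a => ⟪x 1, x a⟫, fun g h => ?_⟩
    calc ⟪x g, x h⟫ = ⟪π g⁻¹ (x g), π g⁻¹ (x h)⟫ := ((π g⁻¹).inner_map_map _ _).symm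
      _ = ⟪x 1, x (g⁻¹ * h)⟫ := by rw [hπ, hπ, inv_mul_cancel]
  · rintro ⟨ν, hν⟩
    refine exists_unitaryRepresentation_of_inner_smul hframe fun g a b => ?_
    simp only [smul_eq_mul, hν, mul_inv_rev, mul_assoc, inv_mul_cancel_left]

/-- Let `G` be a finite group and `X = {x_g}_{g ∈ G}` a finite frame for a
finite-dimensional complex Hilbert space `H`.  Then `X` is a group frame for `G` (there is
a unitary representation `π` of `G` on `H` with `π(g) x_h = x_{g•h}`) iff its Gramian is a
`G`-matrix, i.e. there is `ν : G → ℂ` with `⟨x_h, x_g⟩ = ν(g⁻¹ • h)` for all `g, h`.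
(The paper's inner product `⟨a, b⟩` is linear in the first slot, i.e. Mathlib's `⟪b, a⟫`.) -/
theorem stmt_13 {G : Type} [Group G] [Fintype G]
    {H : Type} [NormedAddCommGroup H] [InnerProductSpace ℂ H] [FiniteDimensional ℂ H]
    (x : G → H) (hframe : Submodule.span ℂ (Set.range x) = ⊤) :
    (∃ π : G →* (H ≃ₗᵢ[ℂ] H), ∀ g h : G, π g (x h) = x (g * h)) ↔
      ∃ ν : G → ℂ, ∀ g h : G, ⟪x g, x h⟫ = ν (g⁻¹ * h) :=
  stmt_13_general x hframe
end

section
/- Let (G, •) be a countable group, H a separable complex Hilbert space, and X = {x_g}_{g ∈ G} a tight frame for H. Suppose G defines a frame multiplication for X with continuous bilinear extension ∗ : H × H → H (so x_g ∗ x_h = x_{g•h} for all g, h ∈ G). Then for every g ∈ G the maps L_g : H → H, L_g(x) = x_g ∗ x, and R_g : H → H, R_g(x) = x ∗ x_g, are unitary linear operators. -/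
set_option maxHeartbeats 1000000

open scoped ComplexInnerProductSpace

open ContinuousLinearMap in
/-- Auxiliary lemma: if `T` and `S` are continuous linear maps permuting a tight frame
via inverse permutations, then `T` agrees with a linear isometric equivalence. -/
lemma aux_stmt_14 {G : Type} [Countable G]
    {H : Type} [NormedAddCommGroup H] [InnerProductSpace ℂ H] [CompleteSpace H]
    (x : G → H) {A : ℝ} (hA : 0 < A)
    (htight : ∀ v : H, HasSum (fun g : G => ‖⟪x g, v⟫‖ ^ 2) (A * ‖v‖ ^ 2))
    (T S : H →L[ℂ] H) (e : G ≃ G)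
    (hT : ∀ h, T (x h) = x (e h)) (hS : ∀ h, S (x h) = x (e.symm h)) :
    ∃ U : H ≃ₗᵢ[ℂ] H, ∀ v : H, U v = T v := by
  -- the span of the frame is dense
  have hdense : Dense ((Submodule.span ℂ (Set.range x) : Submodule ℂ H) : Set H) := by
    rw [Submodule.dense_iff_topologicalClosure_eq_top,
      ← Submodule.orthogonal_orthogonal_eq_closure]
    have hbot : (Submodule.span ℂ (Set.range x))ᗮ = ⊥ := by
      rw [Submodule.eq_bot_iff]
      intro v hv
      have hzero : ∀ g : G, ⟪x g, v⟫ = 0 := fun g =>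
        hv (x g) (Submodule.subset_span ⟨g, rfl⟩)
      have h1 : HasSum (fun g : G => ‖⟪x g, v⟫‖ ^ 2) 0 := by
        simpa [hzero] using hasSum_zero (α := ℝ) (β := G)
      have h2 := (htight v).unique h1
      have : ‖v‖ ^ 2 = 0 := by
        nlinarith [sq_nonneg ‖v‖]
      simpa [pow_eq_zero_iff] using this
    rw [hbot, Submodule.bot_orthogonal_eq_top]
  -- adjoints of frame-permuting operators are isometries
  have key : ∀ (T' : H →L[ℂ] H) (e' : G ≃ G), (∀ h, T' (x h) = x (e' h)) →
      ∀ w : H, ‖adjoint T' w‖ = ‖w‖ := by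
    intro T' e' hT' w
    have h1 : HasSum (fun g : G => ‖⟪x (e' g), w⟫‖ ^ 2) (A * ‖w‖ ^ 2) :=
      (Equiv.hasSum_iff e').mpr (htight w)
    have h2 : HasSum (fun g : G => ‖⟪x g, adjoint T' w⟫‖ ^ 2) (A * ‖w‖ ^ 2) := by
      refine h1.congr_fun fun g => ?_
      rw [adjoint_inner_right, hT']
    have h3 := (htight (adjoint T' w)).unique h2
    have h4 : ‖adjoint T' w‖ ^ 2 = ‖w‖ ^ 2 := by
      have := mul_left_cancel₀ (ne_of_gt hA) h3
      linarith
    nlinarith [norm_nonneg (adjoint T' w), norm_nonneg w]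
  have hSadj := key S e.symm (by simpa using hS)
  have hTadj := key T e hT
  -- S ∘ adjoint S = 1
  have hSS : ∀ w : H, S (adjoint S w) = w := by
    intro w
    have hinner := (LinearMap.norm_map_iff_inner_map_map (adjoint S)).mp hSadj
    refine ext_inner_left ℂ fun u => ?_
    calc ⟪u, S (adjoint S w)⟫ = ⟪adjoint S u, adjoint S w⟫ := by
          rw [adjoint_inner_left]
      _ = ⟪u, w⟫ := hinner u w
  -- T ∘ adjoint T = 1
  have hTT : ∀ w : H, T (adjoint T w) = w := by
    intro w
    have hinner := (LinearMap.norm_map_iff_inner_map_map (adjoint T)).mp hTadj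
    refine ext_inner_left ℂ fun u => ?_
    calc ⟪u, T (adjoint T w)⟫ = ⟪adjoint T u, adjoint T w⟫ := by
          rw [adjoint_inner_left]
      _ = ⟪u, w⟫ := hinner u w
  -- T ∘ S = 1 by density
  have hTS : T.comp S = ContinuousLinearMap.id ℂ H := by
    refine ContinuousLinearMap.ext_on hdense fun v hv => ?_
    obtain ⟨g, rfl⟩ := hv
    simp [hS, hT]
  have hTSv : ∀ v : H, T (S v) = v := fun v => by
    have := ContinuousLinearMap.ext_iff.mp hTS v
    simpa using this
  -- T = adjoint S, hence T is an isometry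
  have hTeq : ∀ v : H, T v = adjoint S v := by
    intro v
    conv_lhs => rw [← hSS v]
    exact hTSv (adjoint S v)
  have hTiso : ∀ v : H, ‖T v‖ = ‖v‖ := fun v => by rw [hTeq]; exact hSadj v
  -- T is surjective: S = adjoint T similarly, and T (S v) = v
  refine ⟨LinearIsometryEquiv.ofSurjective ⟨(T : H →ₗ[ℂ] H), hTiso⟩ fun v => ⟨S v, hTSv v⟩,
    fun v => rfl⟩

/-- Let `(G, •)` be a countable group, `H` a separable complex Hilbert space,
and `X = {x_g}_{g ∈ G}` a tight frame for `H`.  Suppose `G` defines a frame multiplication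
for `X` with continuous bilinear extension `∗` (so `x_g ∗ x_h = x_{g•h}`).  Then for every
`g ∈ G` the maps `L_g : x ↦ x_g ∗ x` and `R_g : x ↦ x ∗ x_g` are unitary linear operators,
i.e. each agrees with a linear isometric isomorphism of `H`. -/
theorem stmt_14 {G : Type} [Group G] [Countable G]
    {H : Type} [NormedAddCommGroup H] [InnerProductSpace ℂ H] [CompleteSpace H]
    [TopologicalSpace.SeparableSpace H]
    (x : G → H)
    (htight : ∃ A : ℝ, 0 < A ∧
      ∀ v : H, HasSum (fun g : G => ‖⟪x g, v⟫‖ ^ 2) (A * ‖v‖ ^ 2))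
    (m : H →L[ℂ] H →L[ℂ] H)
    (hm : ∀ g h : G, m (x g) (x h) = x (g * h)) :
    ∀ g : G,
      (∃ U : H ≃ₗᵢ[ℂ] H, ∀ v : H, U v = m (x g) v) ∧
      (∃ V : H ≃ₗᵢ[ℂ] H, ∀ v : H, V v = m v (x g)) := by
  obtain ⟨A, hA, htight⟩ := htight
  intro g
  constructor
  · exact aux_stmt_14 x hA htight (m (x g)) (m (x g⁻¹)) (Equiv.mulLeft g)
      (fun h => by simp [hm]) (fun h => by simp [hm])
  · obtain ⟨V, hV⟩ := aux_stmt_14 x hA htight (m.flip (x g)) (m.flip (x g⁻¹))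
      (Equiv.mulRight g) (fun h => by simp [hm]) (fun h => by simp [hm])
    exact ⟨V, fun v => by simpa using hV v⟩
end

section
/- Let (G, •) be a finite Abelian group, H a d-dimensional complex Hilbert space, and X = {x_g}_{g ∈ G} a tight frame for H. Then G defines a frame multiplication for X (i.e., there exists a bilinear map ∗ : H × H → H with x_g ∗ x_h = x_{g•h} for all g, h ∈ G) if and only if X is a group frame, i.e., there exists a unitary representation π : G → U(H) with π(g) x_h = x_{g•h} for all g, h ∈ G. -/
open scoped ComplexInnerProductSpace

/-- Let `(G, •)` be a finite Abelian group, `H` a finite-dimensional complex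
Hilbert space, and `X = {x_g}_{g ∈ G}` a tight frame for `H`.  Then `G` defines a frame
multiplication for `X` (there is a bilinear map `∗` with `x_g ∗ x_h = x_{g•h}`) iff `X` is
a group frame (there is a unitary representation `π : G → U(H)` with `π(g) x_h = x_{g•h}`). -/
theorem stmt_15 {G : Type} [CommGroup G] [Fintype G]
    {H : Type} [NormedAddCommGroup H] [InnerProductSpace ℂ H] [FiniteDimensional ℂ H]
    (x : G → H)
    (htight : ∃ A : ℝ, 0 < A ∧ ∀ v : H, ∑ g, ‖⟪x g, v⟫‖ ^ 2 = A * ‖v‖ ^ 2) :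
    (∃ m : H →ₗ[ℂ] H →ₗ[ℂ] H, ∀ g h : G, m (x g) (x h) = x (g * h)) ↔
      (∃ π : G →* (H ≃ₗᵢ[ℂ] H), ∀ g h : G, π g (x h) = x (g * h)) := by
  obtain ⟨A, hA, hframe⟩ := htight
  have hAne : (A : ℂ) ≠ 0 := by
    simpa using hA.ne'
  -- reconstruction formula
  have hrec : ∀ v : H, ∑ g, ⟪x g, v⟫ • x g = (A : ℂ) • v := by
    have hT : (∑ g : G, ((innerSL ℂ (x g)).toLinearMap.smulRight (x g)))
        - (A : ℂ) • (LinearMap.id : H →ₗ[ℂ] H) = 0 := by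
      rw [← inner_map_self_eq_zero]
      intro v
      simp only [LinearMap.sub_apply, LinearMap.sum_apply, LinearMap.smulRight_apply,
        LinearMap.smul_apply, LinearMap.id_apply, inner_sub_left, sum_inner, inner_smul_left,
        ContinuousLinearMap.coe_coe, innerSL_apply_apply]
      have h1 : ∀ g : G, (starRingEnd ℂ) ⟪x g, v⟫ * ⟪x g, v⟫ = ((‖⟪x g, v⟫‖ ^ 2 : ℝ) : ℂ) := by
        intro g; rw [RCLike.conj_mul]; norm_cast
      rw [Finset.sum_congr rfl fun g _ => h1 g]
      rw [← Complex.ofReal_sum, hframe v, inner_self_eq_norm_sq_to_K]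
      simp [Complex.conj_ofReal]
    intro v
    have := LinearMap.congr_fun hT v
    simp only [LinearMap.sub_apply, LinearMap.sum_apply, LinearMap.smulRight_apply,
      LinearMap.smul_apply, LinearMap.id_apply, LinearMap.zero_apply, sub_eq_zero,
      ContinuousLinearMap.coe_coe, innerSL_apply_apply] at this
    exact this
  have hv_eq : ∀ v : H, v = (A : ℂ)⁻¹ • ∑ g, ⟪x g, v⟫ • x g := by
    intro v
    rw [hrec v, smul_smul, inv_mul_cancel₀ hAne, one_smul]
  -- extensionality on the frame
  have hext : ∀ (f₁ f₂ : H →ₗ[ℂ] H), (∀ g : G, f₁ (x g) = f₂ (x g)) → f₁ = f₂ := by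
    intro f₁ f₂ hf
    ext v
    rw [hv_eq v, map_smul, map_smul, map_sum, map_sum]
    simp only [map_smul, hf]
  -- the translation operators
  set L : G → H →ₗ[ℂ] H := fun g =>
    (A : ℂ)⁻¹ • ∑ h : G, ((innerSL ℂ (x h)).toLinearMap.smulRight (x (g * h))) with hL
  have hLapp : ∀ (g : G) (v : H), L g v = (A : ℂ)⁻¹ • ∑ h, ⟪x h, v⟫ • x (g * h) := by
    intro g v
    simp [hL, LinearMap.sum_apply]
  constructor
  · rintro ⟨m, hm⟩
    have hLx : ∀ g a : G, L g (x a) = x (g * a) := by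
      intro g a
      rw [hLapp]
      have h2 : ∑ h, ⟪x h, x a⟫ • x (g * h) = m (x g) ((A : ℂ) • x a) := by
        rw [← hrec (x a), map_sum]
        exact Finset.sum_congr rfl fun h _ => by rw [map_smul, hm]
      rw [h2, map_smul, hm, smul_smul, inv_mul_cancel₀ hAne, one_smul]
    have hLmul : ∀ g h : G, (L g).comp (L h) = L (g * h) := by
      intro g h
      apply hext
      intro a
      simp [hLx, mul_assoc]
    have hLone : L 1 = LinearMap.id := by
      apply hext
      intro a
      simp [hLx]
    have hLinv : ∀ (g : G) (v : H), L g⁻¹ (L g v) = v := by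
      intro g v
      have := LinearMap.congr_fun (hLmul g⁻¹ g) v
      simp only [LinearMap.comp_apply] at this
      rw [this, inv_mul_cancel, hLone, LinearMap.id_apply]
    have hadj : ∀ (g : G) (v w : H), ⟪L g⁻¹ w, v⟫ = ⟪w, L g v⟫ := by
      intro g v w
      rw [hLapp, hLapp, inner_smul_left, inner_smul_right, sum_inner, inner_sum]
      simp only [inner_smul_left, inner_smul_right, map_inv₀, Complex.conj_ofReal]
      congr 1
      rw [← Equiv.sum_comp (Equiv.mulLeft g)
        (fun h => (starRingEnd ℂ) ⟪x h, w⟫ * ⟪x (g⁻¹ * h), v⟫)]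
      refine Finset.sum_congr rfl fun h _ => ?_
      simp only [Equiv.coe_mulLeft, inv_mul_cancel_left]
      rw [← inner_conj_symm w (x (g * h))]
      ring
    have hinner : ∀ (g : G) (v w : H), ⟪L g v, L g w⟫ = ⟪v, w⟫ := by
      intro g v w
      have h := hadj g w (L g v)
      rw [hLinv] at h
      exact h.symm
    have hLinv' : ∀ (g : G) (v : H), L g (L g⁻¹ v) = v := by
      intro g v
      have := hLinv g⁻¹ v
      rwa [inv_inv] at this
    -- build the representation
    let E : G → H ≃ₗ[ℂ] H := fun g =>
      LinearEquiv.ofLinear (L g) (L g⁻¹)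
        (by ext v; exact hLinv' g v) (by ext v; exact hLinv g v)
    let P : G → H ≃ₗᵢ[ℂ] H := fun g => (E g).isometryOfInner (fun v w => hinner g v w)
    have hPapp : ∀ (g : G) (v : H), P g v = L g v := fun g v => rfl
    refine ⟨MonoidHom.mk' P ?_, ?_⟩
    · intro g h
      apply LinearIsometryEquiv.ext
      intro v
      have := LinearMap.congr_fun (hLmul g h) v
      simp only [LinearMap.comp_apply] at this
      calc P (g * h) v = L (g * h) v := rfl
        _ = L g (L h v) := this.symm
        _ = (P g * P h) v := rfl
    · intro g h
      exact hLx g h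
  · rintro ⟨π, hπ⟩
    have hLx : ∀ g a : G, L g (x a) = x (g * a) := by
      intro g a
      rw [hLapp]
      have h2 : ∑ h, ⟪x h, x a⟫ • x (g * h) = π g ((A : ℂ) • x a) := by
        rw [← hrec (x a), map_sum]
        exact Finset.sum_congr rfl fun h _ => by rw [map_smul, hπ]
      rw [h2, map_smul, hπ, smul_smul, inv_mul_cancel₀ hAne, one_smul]
    refine ⟨(A : ℂ)⁻¹ • ∑ g : G, ((innerSL ℂ (x g)).toLinearMap.smulRight (L g)), ?_⟩
    intro a b
    simp only [LinearMap.smul_apply, LinearMap.sum_apply, LinearMap.smulRight_apply,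
      ContinuousLinearMap.coe_coe, innerSL_apply_apply]
    have h3 : ∀ g : G, (L g) (x b) = π b (x g) := by
      intro g
      rw [hLx, mul_comm, ← hπ]
    simp only [LinearMap.smul_apply, h3]
    have h4 : ∑ g, ⟪x g, x a⟫ • π b (x g) = π b ((A : ℂ) • x a) := by
      rw [← hrec (x a), map_sum]
      exact Finset.sum_congr rfl fun g _ => (map_smul _ _ _).symm
    rw [h4, map_smul, hπ, smul_smul, inv_mul_cancel₀ hAne, one_smul, mul_comm a b]
end

section
/- Let X = {x_n}_{n ∈ ℤ/Nℤ} be a tight frame for ℂ^d. If ℤ/Nℤ defines a frame multiplication for X, i.e., there exists a bilinear map ∗ : ℂ^d × ℂ^d → ℂ^d with x_m ∗ x_n = x_{m+n} for all m, n ∈ ℤ/Nℤ, then X is unitarily equivalent to a DFT frame: there exist a unitary operator U on ℂ^d, a constant c > 0, and an injective map s : ℤ/dℤ → ℤ/Nℤ such that cU(x_m) = (e^{2πi m s(0)/N}, …, e^{2πi m s(d-1)/N}) for every m ∈ ℤ/Nℤ. -/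
/-!
Right multiplication by `x 1` is a linear map `L` with `L (x a) = x (a + 1)`. Since it permutes
a tight frame it preserves the frame operator `A • id`, so `L` is unitary. The discrete Fourier
transform `y k = ∑ j, e^{-2πi jk/N} • x j` of the frame consists of eigenvectors of `L` for the
distinct eigenvalues `e^{2πik/N}`, hence is orthogonal. Fourier inversion then gives
`⟪y k, x a⟫ = N⁻¹ e^{2πika/N} ‖y k‖²`, and tightness forces `‖y k‖² = A N` whenever `y k ≠ 0`.
The normalized nonzero `y k` form an orthonormal basis in which every `x a` has coordinates
proportional to `e^{2πika/N}`; there are exactly `d` of them.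
-/

open scoped ComplexInnerProductSpace

section

variable {ι E : Type*} [Fintype ι] [NormedAddCommGroup E] [InnerProductSpace ℂ E]

def IsTightFrame (x : ι → E) (A : ℝ) : Prop :=
  0 < A ∧ ∀ v, ∑ n, ‖⟪x n, v⟫‖ ^ 2 = A * ‖v‖ ^ 2

namespace IsTightFrame

variable {x : ι → E} {A : ℝ}

theorem sum_inner_smul (hx : IsTightFrame x A) (w : E) :
    ∑ n, ⟪x n, w⟫ • x n = (A : ℂ) • w := by
  let S : E →ₗ[ℂ] E := ∑ n, (innerₛₗ ℂ (x n)).smulRight (x n)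
  have hS : S = (A : ℂ) • LinearMap.id := by
    rw [← sub_eq_zero, ← inner_map_self_eq_zero]
    intro v
    have hSv : ⟪S v, v⟫ = ∑ n, ((‖⟪x n, v⟫‖ ^ 2 : ℝ) : ℂ) := by
      simp only [S, LinearMap.sum_apply, LinearMap.smulRight_apply, innerₛₗ_apply_apply,
        sum_inner, inner_smul_left, RCLike.conj_mul]
      norm_cast
    have hvv : ⟪v, v⟫ = ((‖v‖ ^ 2 : ℝ) : ℂ) := by exact_mod_cast inner_self_eq_norm_sq_to_K v
    rw [LinearMap.sub_apply, inner_sub_left, hSv, ← Complex.ofReal_sum, hx.2 v,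
      LinearMap.smul_apply, inner_smul_left, LinearMap.id_apply, hvv, Complex.conj_ofReal]
    push_cast; ring
  simpa [S] using LinearMap.congr_fun hS w

theorem span_eq_top (hx : IsTightFrame x A) : Submodule.span ℂ (Set.range x) = ⊤ := by
  refine eq_top_iff.2 fun w _ => ?_
  have hA : (A : ℂ) ≠ 0 := by exact_mod_cast hx.1.ne'
  rw [← inv_smul_smul₀ hA w, ← hx.sum_inner_smul]
  exact Submodule.smul_mem _ _ <| Submodule.sum_mem _ fun n _ =>
    Submodule.smul_mem _ _ <| Submodule.subset_span ⟨n, rfl⟩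

theorem inner_map_map_of_perm [FiniteDimensional ℂ E] (hx : IsTightFrame x A)
    (σ : Equiv.Perm ι) {L : E →ₗ[ℂ] E} (hL : ∀ n, L (x n) = x (σ n)) (v w : E) :
    ⟪L v, L w⟫ = ⟪v, w⟫ := by
  have hA : (A : ℂ) ≠ 0 := by exact_mod_cast hx.1.ne'
  have hLL : L * L.adjoint = 1 := LinearMap.ext fun u => smul_right_injective E hA <| by
    calc (A : ℂ) • L (L.adjoint u) = ∑ n, ⟪x n, L.adjoint u⟫ • L (x n) := by
          rw [← map_smul, ← hx.sum_inner_smul, map_sum]; simp only [map_smul]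
      _ = ∑ n, ⟪x (σ n), u⟫ • x (σ n) := by
          simp only [LinearMap.adjoint_inner_right, hL]
      _ = (A : ℂ) • u := by
          rw [Equiv.sum_comp σ (fun n => ⟪x n, u⟫ • x n), hx.sum_inner_smul]
  rw [← LinearMap.adjoint_inner_right, ← Module.End.mul_apply, mul_eq_one_comm.1 hLL,
    Module.End.one_apply]

end IsTightFrame

theorem inner_eq_zero_of_isometry_eigenvectors {L : E →ₗ[ℂ] E}
    (hL : ∀ v w, ⟪L v, L w⟫ = ⟪v, w⟫)
    {μ ν : ℂ} {v w : E} (hv : L v = μ • v) (hw : L w = ν • w) (hμν : μ ≠ ν) : ⟪v, w⟫ = 0 := by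
  by_contra h
  have hvv : ⟪v, v⟫ ≠ 0 := by
    rw [inner_self_ne_zero]; rintro rfl; simp at h
  have hμ : starRingEnd ℂ μ * μ = 1 := by
    have := hL v v
    rw [hv, inner_smul_left, inner_smul_right, ← mul_assoc] at this
    exact mul_right_cancel₀ hvv (this.trans (one_mul _).symm)
  have hν : starRingEnd ℂ μ * ν = 1 := by
    have := hL v w
    rw [hv, hw, inner_smul_left, inner_smul_right, ← mul_assoc] at this
    exact mul_right_cancel₀ h (this.trans (one_mul _).symm)
  exact hμν (mul_left_cancel₀ (left_ne_zero_of_mul_eq_one hμ) (hμ.trans hν.symm))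

end

namespace ZMod

variable {N : ℕ} [NeZero N]

theorem dft_apply_eq_smul_of_shift {V : Type*} [AddCommGroup V] [Module ℂ V]
    {x : ZMod N → V} {L : V →ₗ[ℂ] V} (hL : ∀ a, L (x a) = x (a + 1)) (k : ZMod N) :
    L (𝓕 x k) = stdAddChar k • 𝓕 x k := by
  simp only [dft_apply, map_sum, LinearMap.map_smul, hL, Finset.smul_sum, smul_smul]
  refine Fintype.sum_equiv (Equiv.addRight 1) _ _ fun j => ?_
  rw [Equiv.coe_addRight, ← AddChar.map_add_eq_mul]
  ring_nf

theorem stdAddChar_mul_eq_exp (a b : ZMod N) :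
    stdAddChar (a * b) =
      Complex.exp (2 * Real.pi * Complex.I * (a.val : ℂ) * (b.val : ℂ) / (N : ℂ)) := by
  have hab : a * b = ((a.val * b.val : ℕ) : ZMod N) := by simp
  rw [hab, stdAddChar_apply, toCircle_natCast]
  push_cast; ring_nf

variable {E : Type*} [NormedAddCommGroup E] [InnerProductSpace ℂ E] {x : ZMod N → E}

theorem inner_dft_dft_eq_zero {L : E →ₗ[ℂ] E} (hiso : ∀ v w, ⟪L v, L w⟫ = ⟪v, w⟫)
    (hL : ∀ a, L (x a) = x (a + 1)) {k l : ZMod N} (hkl : k ≠ l) : ⟪𝓕 x k, 𝓕 x l⟫ = 0 :=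
  inner_eq_zero_of_isometry_eigenvectors hiso (dft_apply_eq_smul_of_shift hL k)
    (dft_apply_eq_smul_of_shift hL l) (injective_stdAddChar.ne hkl)

theorem inner_dft_apply_of_pairwise_orthogonal (horth : Pairwise fun k l => ⟪𝓕 x k, 𝓕 x l⟫ = 0)
    (k a : ZMod N) : ⟪𝓕 x k, x a⟫ = (N : ℂ)⁻¹ * stdAddChar (k * a) * ‖𝓕 x k‖ ^ 2 := by
  have hx : x a = (N : ℂ)⁻¹ • ∑ l, stdAddChar (l * a) • 𝓕 x l := by
    rw [← invDFT_apply, LinearEquiv.symm_apply_apply]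
  have hsum : ∑ l, ⟪𝓕 x k, stdAddChar (l * a) • 𝓕 x l⟫ =
      stdAddChar (k * a) * ⟪𝓕 x k, 𝓕 x k⟫ := by
    rw [Fintype.sum_eq_single k fun l hlk => by
      rw [inner_smul_right, horth (Ne.symm hlk), mul_zero], inner_smul_right]
  have hself : ⟪𝓕 x k, 𝓕 x k⟫ = (‖𝓕 x k‖ : ℂ) ^ 2 := inner_self_eq_norm_sq_to_K _
  rw [hx, inner_smul_right, inner_sum, hsum, hself, mul_assoc]

end ZMod

open ZMod

namespace IsTightFrame

variable {N : ℕ} [NeZero N] {E : Type*} [NormedAddCommGroup E] [InnerProductSpace ℂ E]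
  {x : ZMod N → E} {A : ℝ}

theorem norm_sq_dft (hx : IsTightFrame x A) (horth : Pairwise fun k l => ⟪𝓕 x k, 𝓕 x l⟫ = 0)
    {k : ZMod N} (hk : 𝓕 x k ≠ 0) : ‖𝓕 x k‖ ^ 2 = A * N := by
  have hnorm (a : ZMod N) : ‖⟪x a, 𝓕 x k⟫‖ = (N : ℝ)⁻¹ * ‖𝓕 x k‖ ^ 2 := by
    rw [norm_inner_symm, inner_dft_apply_of_pairwise_orthogonal horth, norm_mul, norm_mul,
      stdAddChar_apply, Circle.norm_coe]
    simp
  have htight := hx.2 (𝓕 x k)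
  simp only [hnorm, Finset.sum_const, Finset.card_univ, ZMod.card, nsmul_eq_mul] at htight
  have hN : (N : ℝ) ≠ 0 := NeZero.ne _
  have hpos : 0 < ‖𝓕 x k‖ ^ 2 := by positivity
  field_simp at htight
  nlinarith

theorem exists_orthonormalBasis_dft (hx : IsTightFrame x A)
    (horth : Pairwise fun k l => ⟪𝓕 x k, 𝓕 x l⟫ = 0) :
    ∃ (K : Finset (ZMod N)) (B : OrthonormalBasis K ℂ E) (c : ℝ), 0 < c ∧
      ∀ (k : K) a, B.repr (x a) k = c * stdAddChar ((k : ZMod N) * a) := by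
  classical
  let K := Finset.univ.filter fun k => 𝓕 x k ≠ 0
  have hN : (0 : ℝ) < N := by exact_mod_cast NeZero.pos N
  set r := √(A * N)
  have hr : 0 < r := Real.sqrt_pos.2 (mul_pos hx.1 hN)
  have hdft (k : K) : ‖𝓕 x k‖ = r := by
    rw [← Real.sqrt_sq (norm_nonneg _), hx.norm_sq_dft horth (Finset.mem_filter.1 k.2).2]
  let u (k : K) : E := ((r⁻¹ : ℝ) : ℂ) • 𝓕 x k
  have hr' : (r : ℂ) ≠ 0 := by exact_mod_cast hr.ne'
  have hu : Orthonormal ℂ u :=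
    ⟨fun k => by simp [u, norm_smul, hdft, abs_of_pos hr, hr.ne'], fun k l hkl => by
      simp [u, inner_smul_left, inner_smul_right, horth (Subtype.coe_injective.ne hkl)]⟩
  have hspan : ⊤ ≤ Submodule.span ℂ (Set.range u) := by
    rw [← hx.span_eq_top, Submodule.span_le]
    rintro _ ⟨a, rfl⟩
    rw [← dft.symm_apply_apply x, invDFT_apply]
    refine Submodule.smul_mem _ _ (Submodule.sum_mem _ fun k _ => Submodule.smul_mem _ _ ?_)
    by_cases hk : 𝓕 x k = 0
    · rw [hk]
      exact zero_mem _
    · have hku : 𝓕 x k = (r : ℂ) • u ⟨k, by simpa [K] using hk⟩ := by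
        simp only [u, smul_smul]
        push_cast
        rw [mul_inv_cancel₀ hr', one_smul]
      rw [hku]
      exact Submodule.smul_mem _ _ (Submodule.subset_span ⟨_, rfl⟩)
  refine ⟨K, OrthonormalBasis.mk hu hspan, r / N, div_pos hr hN, fun k a => ?_⟩
  rw [OrthonormalBasis.repr_apply_apply, OrthonormalBasis.coe_mk, inner_smul_left,
    inner_dft_apply_of_pairwise_orthogonal horth, hdft, Complex.conj_ofReal]
  push_cast
  field_simp

end IsTightFrame

/-- Let `X = {x_n}_{n ∈ ℤ/Nℤ}` be a tight frame for `ℂ^d`.  If `ℤ/Nℤ` defines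
a frame multiplication for `X` (a bilinear `∗` with `x_m ∗ x_n = x_{m+n}`), then `X` is
unitarily equivalent to a DFT frame: there are a unitary `U`, a constant `c > 0`, and an
injective `s : ℤ/dℤ → ℤ/Nℤ` (here realized as an injection of the `d` coordinates into
`ℤ/Nℤ`) with `cU(x_m) = (e^{2πi m s(0)/N}, …, e^{2πi m s(d-1)/N})` for all `m`. -/
theorem stmt_17 (N d : ℕ) [NeZero N]
    (x : ZMod N → EuclideanSpace ℂ (Fin d))
    (htight : ∃ A : ℝ, 0 < A ∧
      ∀ v : EuclideanSpace ℂ (Fin d), ∑ n, ‖⟪x n, v⟫‖ ^ 2 = A * ‖v‖ ^ 2)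
    (m : EuclideanSpace ℂ (Fin d) →ₗ[ℂ]
      EuclideanSpace ℂ (Fin d) →ₗ[ℂ] EuclideanSpace ℂ (Fin d))
    (hm : ∀ a b : ZMod N, m (x a) (x b) = x (a + b)) :
    ∃ (U : EuclideanSpace ℂ (Fin d) ≃ₗᵢ[ℂ] EuclideanSpace ℂ (Fin d)) (c : ℝ)
      (s : Fin d → ZMod N),
      0 < c ∧ Function.Injective s ∧
      ∀ (a : ZMod N) (j : Fin d),
        ((c : ℂ) • U (x a)) j =
          Complex.exp (2 * Real.pi * Complex.I * (a.val : ℂ) * ((s j).val : ℂ) / (N : ℂ)) := by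
  obtain ⟨A, hx⟩ : ∃ A, IsTightFrame x A := htight
  have hshift (a : ZMod N) : m.flip (x 1) (x a) = x (a + 1) := hm a 1
  have horth : Pairwise fun k l => ⟪𝓕 x k, 𝓕 x l⟫ = 0 := fun k l =>
    inner_dft_dft_eq_zero (hx.inner_map_map_of_perm (Equiv.addRight 1) hshift) hshift
  obtain ⟨K, B, c, hc, hB⟩ := hx.exists_orthonormalBasis_dft horth
  have hK : Fintype.card K = d := by
    simpa using (Module.finrank_eq_card_basis B.toBasis).symm
  let e : Fin d ≃ K := (Fintype.equivFinOfCardEq hK).symm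
  refine ⟨(B.reindex e.symm).repr, c⁻¹, fun j => e j, inv_pos.2 hc,
    Subtype.val_injective.comp e.injective, fun a j => ?_⟩
  have hc' : (c : ℂ) ≠ 0 := by exact_mod_cast hc.ne'
  rw [PiLp.smul_apply, OrthonormalBasis.repr_reindex, Equiv.symm_symm, hB,
    mul_comm (e j : ZMod N), stdAddChar_mul_eq_exp, smul_eq_mul, Complex.ofReal_inv,
    inv_mul_cancel_left₀ hc']
end
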